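/- Let A ⊂ R^7 = R^3_x × R^4_y be the 3-submanifold given by x² = x³ = 0, y² = B²(x¹), y³ = B³(x¹) for smooth functions B², B³. Then A is associative (the restriction of Ω to A equals the induced volume form, equivalently A is calibrated by Ω) if and only if B² and B³ are constant functions. -/

import Mathlib

/- STATEMENT 11: The 3-submanifold A ⊂ ℝ⁷ parametrized by
(x¹,y⁰,y¹) ↦ (x¹,0,0,y⁰,y¹,B²(x¹),B³(x¹)) is associative (the pullback of Ω equals the
induced Riemannian volume form, i.e. A is calibrated by Ω) iff B² and B³ are constant.
Coordinates on ℝ⁷: x¹x²x³ = 0,1,2 and y⁰y¹y²y³ = 3,4,5,6. -/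

open Finset Matrix

abbrev Form (n : ℕ) := Finset (Fin n) → ℝ
abbrev FormF (n : ℕ) := (Fin n → ℝ) → Form n

def invCount {n : ℕ} (A B : Finset (Fin n)) : ℕ :=
  ∑ a ∈ A, (B.filter (fun b => b < a)).card

noncomputable def wedge {n : ℕ} (α β : Form n) : Form n :=
  fun S => ∑ A ∈ S.powerset, (-1 : ℝ) ^ invCount A (S \ A) * α A * β (S \ A)

def dxm {n : ℕ} (A : Finset (Fin n)) : Form n := fun S => if S = A then 1 else 0

noncomputable def stdOmega : Form 7 :=
  dxm {0,1,2}
    - wedge (dxm {0}) (dxm {5,6} - dxm {3,4})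
    - wedge (dxm {1}) (-(dxm {4,6}) - dxm {3,5})
    - wedge (dxm {2}) (dxm {4,5} - dxm {3,6})

noncomputable def jacobian {k n : ℕ} (φ : (Fin k → ℝ) → (Fin n → ℝ)) (x : Fin k → ℝ) :
    Matrix (Fin n) (Fin k) ℝ := fun i j => fderiv ℝ φ x (Pi.single j 1) i

noncomputable def minorDet {k n : ℕ} (J : Matrix (Fin n) (Fin k) ℝ)
    (T : Finset (Fin n)) (S : Finset (Fin k)) : ℝ :=
  if h : S.card = T.card then
    Matrix.det (Matrix.of fun i j : Fin T.card =>
      J ((T.orderIsoOfFin rfl i : Fin n)) ((S.orderIsoOfFin h j : Fin k)))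
  else 0

/-- Pullback of a constant-coefficient form on ℝⁿ along φ : ℝᵏ → ℝⁿ. -/
noncomputable def pullback {k n : ℕ} (φ : (Fin k → ℝ) → (Fin n → ℝ)) (α : Form n) :
    FormF k := fun x S => ∑ T : Finset (Fin n), α T * minorDet (jacobian φ x) T S

/-- The coefficient of the induced volume form of a parametrized submanifold:
√det(JᵀJ). -/
noncomputable def volCoeff {k n : ℕ} (φ : (Fin k → ℝ) → (Fin n → ℝ)) (x : Fin k → ℝ) : ℝ :=
  Real.sqrt (Matrix.det ((jacobian φ x)ᵀ * jacobian φ x))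

/-! vector evaluation helpers -/

section VecEval
variable {α : Type*}

lemma cv7_1 (x : α) (u : Fin 6 → α) : Matrix.vecCons x u 1 = u 0 := rfl
lemma cv7_2 (x : α) (u : Fin 6 → α) : Matrix.vecCons x u 2 = u 1 := rfl
lemma cv7_3 (x : α) (u : Fin 6 → α) : Matrix.vecCons x u 3 = u 2 := rfl
lemma cv7_4 (x : α) (u : Fin 6 → α) : Matrix.vecCons x u 4 = u 3 := rfl
lemma cv7_5 (x : α) (u : Fin 6 → α) : Matrix.vecCons x u 5 = u 4 := rfl
lemma cv7_6 (x : α) (u : Fin 6 → α) : Matrix.vecCons x u 6 = u 5 := rfl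
lemma cv6_1 (x : α) (u : Fin 5 → α) : Matrix.vecCons x u 1 = u 0 := rfl
lemma cv6_2 (x : α) (u : Fin 5 → α) : Matrix.vecCons x u 2 = u 1 := rfl
lemma cv6_3 (x : α) (u : Fin 5 → α) : Matrix.vecCons x u 3 = u 2 := rfl
lemma cv6_4 (x : α) (u : Fin 5 → α) : Matrix.vecCons x u 4 = u 3 := rfl
lemma cv6_5 (x : α) (u : Fin 5 → α) : Matrix.vecCons x u 5 = u 4 := rfl
lemma cv5_1 (x : α) (u : Fin 4 → α) : Matrix.vecCons x u 1 = u 0 := rfl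
lemma cv5_2 (x : α) (u : Fin 4 → α) : Matrix.vecCons x u 2 = u 1 := rfl
lemma cv5_3 (x : α) (u : Fin 4 → α) : Matrix.vecCons x u 3 = u 2 := rfl
lemma cv5_4 (x : α) (u : Fin 4 → α) : Matrix.vecCons x u 4 = u 3 := rfl
lemma cv4_1 (x : α) (u : Fin 3 → α) : Matrix.vecCons x u 1 = u 0 := rfl
lemma cv4_2 (x : α) (u : Fin 3 → α) : Matrix.vecCons x u 2 = u 1 := rfl
lemma cv4_3 (x : α) (u : Fin 3 → α) : Matrix.vecCons x u 3 = u 2 := rfl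
lemma cv3_1 (x : α) (u : Fin 2 → α) : Matrix.vecCons x u 1 = u 0 := rfl
lemma cv3_2 (x : α) (u : Fin 2 → α) : Matrix.vecCons x u 2 = u 1 := rfl
lemma cv2_1 (x : α) (u : Fin 1 → α) : Matrix.vecCons x u 1 = u 0 := rfl
lemma cv_0 {m : ℕ} (x : α) (u : Fin m → α) : Matrix.vecCons x u 0 = x := rfl

end VecEval

/-! ### Auxiliary lemmas -/

lemma wedge_sub {n : ℕ} (α β γ : Form n) : wedge α (β - γ) = wedge α β - wedge α γ := by
  funext S
  simp only [wedge, Pi.sub_apply, mul_sub, Finset.sum_sub_distrib]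

lemma wedge_neg {n : ℕ} (α β : Form n) : wedge α (-β) = - wedge α β := by
  funext S
  simp only [wedge, Pi.neg_apply, mul_neg, Pi.neg_apply, Finset.sum_neg_distrib]

lemma wedge_dxm_left {n : ℕ} (A : Finset (Fin n)) (β : Form n) (S : Finset (Fin n)) :
    wedge (dxm A) β S = if A ⊆ S then (-1:ℝ)^invCount A (S\A) * β (S\A) else 0 := by
  unfold wedge dxm
  have h : ∀ A' ∈ S.powerset,
      (-1:ℝ)^invCount A' (S\A') * (if A' = A then (1:ℝ) else 0) * β (S\A')
      = if A' = A then (-1:ℝ)^invCount A (S\A) * β (S\A) else 0 := by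
    intro A' _
    split_ifs with h
    · subst h; ring
    · ring
  rw [Finset.sum_congr rfl h, Finset.sum_ite_eq' S.powerset A]
  simp only [Finset.mem_powerset]

lemma wedge_dxm_dxm {n : ℕ} (A B : Finset (Fin n)) (h : Disjoint A B) :
    wedge (dxm A) (dxm B) = fun S => (-1:ℝ)^invCount A B * dxm (A ∪ B) S := by
  funext S
  rw [wedge_dxm_left]
  by_cases hA : A ⊆ S
  · rw [if_pos hA]
    by_cases hB : S \ A = B
    · have hS : S = A ∪ B := by
        rw [← hB, Finset.union_sdiff_of_subset hA]
      rw [hB]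
      simp [dxm, hS]
    · have hS : S ≠ A ∪ B := by
        intro hS
        exact hB (by rw [hS, Finset.union_sdiff_cancel_left h])
      simp [dxm, hB, hS]
  · rw [if_neg hA]
    have hS : S ≠ A ∪ B := fun hS => hA (hS ▸ Finset.subset_union_left)
    simp [dxm, hS]

lemma sum_dxm_mul {n : ℕ} (A : Finset (Fin n)) (m : Finset (Fin n) → ℝ) :
    ∑ T : Finset (Fin n), dxm A T * m T = m A := by
  have h : ∀ T ∈ (Finset.univ : Finset (Finset (Fin n))),
      dxm A T * m T = if T = A then m T else 0 := by
    intro T _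
    simp only [dxm]
    split_ifs <;> ring
  rw [Finset.sum_congr rfl h, Finset.sum_ite_eq' Finset.univ A m, if_pos (Finset.mem_univ A)]

set_option maxRecDepth 8000 in
lemma stdOmega_eq : stdOmega = fun S =>
    dxm {0,1,2} S - dxm {0,5,6} S + dxm {0,3,4} S + dxm {1,4,6} S
      + dxm {1,3,5} S - dxm {2,4,5} S + dxm {2,3,6} S := by
  have e1 : wedge (dxm ({0} : Finset (Fin 7))) (dxm {5,6}) = dxm {0,5,6} := by
    rw [wedge_dxm_dxm _ _ (by decide)]
    funext S
    rw [show invCount ({0} : Finset (Fin 7)) {5,6} = 0 from by decide,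
      show ({0} : Finset (Fin 7)) ∪ {5,6} = {0,5,6} from by decide]
    norm_num
  have e2 : wedge (dxm ({0} : Finset (Fin 7))) (dxm {3,4}) = dxm {0,3,4} := by
    rw [wedge_dxm_dxm _ _ (by decide)]
    funext S
    rw [show invCount ({0} : Finset (Fin 7)) {3,4} = 0 from by decide,
      show ({0} : Finset (Fin 7)) ∪ {3,4} = {0,3,4} from by decide]
    norm_num
  have e3 : wedge (dxm ({1} : Finset (Fin 7))) (dxm {4,6}) = dxm {1,4,6} := by
    rw [wedge_dxm_dxm _ _ (by decide)]
    funext S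
    rw [show invCount ({1} : Finset (Fin 7)) {4,6} = 0 from by decide,
      show ({1} : Finset (Fin 7)) ∪ {4,6} = {1,4,6} from by decide]
    norm_num
  have e4 : wedge (dxm ({1} : Finset (Fin 7))) (dxm {3,5}) = dxm {1,3,5} := by
    rw [wedge_dxm_dxm _ _ (by decide)]
    funext S
    rw [show invCount ({1} : Finset (Fin 7)) {3,5} = 0 from by decide,
      show ({1} : Finset (Fin 7)) ∪ {3,5} = {1,3,5} from by decide]
    norm_num
  have e5 : wedge (dxm ({2} : Finset (Fin 7))) (dxm {4,5}) = dxm {2,4,5} := by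
    rw [wedge_dxm_dxm _ _ (by decide)]
    funext S
    rw [show invCount ({2} : Finset (Fin 7)) {4,5} = 0 from by decide,
      show ({2} : Finset (Fin 7)) ∪ {4,5} = {2,4,5} from by decide]
    norm_num
  have e6 : wedge (dxm ({2} : Finset (Fin 7))) (dxm {3,6}) = dxm {2,3,6} := by
    rw [wedge_dxm_dxm _ _ (by decide)]
    funext S
    rw [show invCount ({2} : Finset (Fin 7)) {3,6} = 0 from by decide,
      show ({2} : Finset (Fin 7)) ∪ {3,6} = {2,3,6} from by decide]
    norm_num
  funext S
  rw [stdOmega, wedge_sub, wedge_sub, wedge_sub, wedge_neg, e1, e2, e3, e4, e5, e6]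
  simp only [Pi.sub_apply, Pi.neg_apply]
  ring

lemma minorDet_ne {k n : ℕ} (J : Matrix (Fin n) (Fin k) ℝ)
    (T : Finset (Fin n)) (S : Finset (Fin k)) (h : S.card ≠ T.card) :
    minorDet J T S = 0 := dif_neg h

lemma minorDet_univ3 {n : ℕ} (J : Matrix (Fin n) (Fin 3) ℝ) (T : Finset (Fin n))
    (f : Fin 3 → Fin n) (h : T.card = 3) (hf : ∀ i, f i ∈ T) (hm : StrictMono f) :
    minorDet J T (Finset.univ : Finset (Fin 3)) =
      Matrix.det (Matrix.of fun i j : Fin 3 => J (f i) j) := by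
  have hS : (Finset.univ : Finset (Fin 3)).card = T.card := by
    rw [h]; simp
  rw [minorDet, dif_pos hS]
  have hcast : StrictMono (Fin.cast h) := fun x y hxy => hxy
  have hT : ∀ i : Fin T.card, (T.orderIsoOfFin rfl i : Fin n) = f (Fin.cast h i) := by
    intro i
    rw [Finset.coe_orderIsoOfFin_apply]
    have := Finset.orderEmbOfFin_unique (s := T) (h := (rfl : T.card = T.card))
      (f := fun i => f (Fin.cast h i)) (fun x => hf _) (hm.comp hcast)
    exact (congrFun this i).symm
  have hU : ∀ j : Fin T.card,
      ((Finset.univ : Finset (Fin 3)).orderIsoOfFin hS j : Fin 3) = Fin.cast h j := by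
    intro j
    rw [Finset.coe_orderIsoOfFin_apply]
    have := Finset.orderEmbOfFin_unique (s := (Finset.univ : Finset (Fin 3))) (h := hS)
      (f := fun j : Fin T.card => Fin.cast h j) (fun x => Finset.mem_univ _) hcast
    exact (congrFun this j).symm
  have key : (Matrix.of fun i j : Fin T.card =>
        J ((T.orderIsoOfFin rfl i : Fin n))
          (((Finset.univ : Finset (Fin 3)).orderIsoOfFin hS j : Fin 3)))
      = (Matrix.of fun i j : Fin 3 => J (f i) j).submatrix (finCongr h) (finCongr h) := by
    ext i j
    simp only [Matrix.of_apply, Matrix.submatrix_apply, finCongr_apply]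
    rw [hT i, hU j]
  rw [key, Matrix.det_submatrix_equiv_self]

/-- The explicit jacobian matrix of our parametrization. -/
def Mof (b c : ℝ) : Matrix (Fin 7) (Fin 3) ℝ :=
  Matrix.of ![![1,0,0], ![0,0,0], ![0,0,0], ![0,1,0], ![0,0,1], ![b,0,0], ![c,0,0]]

lemma Mof_apply (b c : ℝ) (i : Fin 7) (j : Fin 3) :
    Mof b c i j = ![![1,0,0], ![0,0,0], ![0,0,0], ![0,1,0], ![0,0,1],
      ![b,0,0], ![c,0,0]] i j := rfl

lemma Mof_det (b c : ℝ) : Matrix.det ((Mof b c)ᵀ * Mof b c) = 1 + b^2 + c^2 := by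
  have h : (Mof b c)ᵀ * Mof b c = !![1 + b^2 + c^2, 0, 0; 0, 1, 0; 0, 0, 1] := by
    ext i j
    fin_cases i <;> fin_cases j <;>
      simp [Matrix.mul_apply, Fin.sum_univ_seven, Matrix.transpose_apply, Mof_apply,
        Matrix.vecHead, Matrix.vecTail, Function.comp, cv_0, cv7_1, cv7_2, cv7_3, cv7_4, cv7_5, cv7_6, cv6_1, cv6_2, cv6_3, cv6_4,
        cv6_5, cv5_1, cv5_2, cv5_3, cv5_4, cv4_1, cv4_2, cv4_3, cv3_1, cv3_2, cv2_1]
        <;> try ring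
  rw [h, Matrix.det_fin_three]
  norm_num [cv_0, cv3_1, cv3_2, cv2_1, Matrix.vecHead, Matrix.vecTail]

lemma minor_012 (b c : ℝ) : minorDet (Mof b c) {0,1,2} Finset.univ = 0 := by
  rw [minorDet_univ3 _ _ ![0,1,2] (by decide) (by decide) (by decide), Matrix.det_fin_three]
  simp [Mof_apply, Matrix.vecHead, Matrix.vecTail, Function.comp, cv_0, cv7_1, cv7_2, cv7_3, cv7_4, cv7_5, cv7_6, cv6_1, cv6_2,
    cv6_3, cv6_4, cv6_5, cv5_1, cv5_2, cv5_3, cv5_4, cv4_1, cv4_2, cv4_3, cv3_1,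
    cv3_2, cv2_1]

lemma minor_056 (b c : ℝ) : minorDet (Mof b c) {0,5,6} Finset.univ = 0 := by
  rw [minorDet_univ3 _ _ ![0,5,6] (by decide) (by decide) (by decide), Matrix.det_fin_three]
  simp [Mof_apply, Matrix.vecHead, Matrix.vecTail, Function.comp, cv_0, cv7_1, cv7_2, cv7_3, cv7_4, cv7_5, cv7_6, cv6_1, cv6_2,
    cv6_3, cv6_4, cv6_5, cv5_1, cv5_2, cv5_3, cv5_4, cv4_1, cv4_2, cv4_3, cv3_1,
    cv3_2, cv2_1]

lemma minor_034 (b c : ℝ) : minorDet (Mof b c) {0,3,4} Finset.univ = 1 := by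
  rw [minorDet_univ3 _ _ ![0,3,4] (by decide) (by decide) (by decide), Matrix.det_fin_three]
  simp [Mof_apply, Matrix.vecHead, Matrix.vecTail, Function.comp, cv_0, cv7_1, cv7_2, cv7_3, cv7_4, cv7_5, cv7_6, cv6_1, cv6_2,
    cv6_3, cv6_4, cv6_5, cv5_1, cv5_2, cv5_3, cv5_4, cv4_1, cv4_2, cv4_3, cv3_1,
    cv3_2, cv2_1]

lemma minor_146 (b c : ℝ) : minorDet (Mof b c) {1,4,6} Finset.univ = 0 := by
  rw [minorDet_univ3 _ _ ![1,4,6] (by decide) (by decide) (by decide), Matrix.det_fin_three]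
  simp [Mof_apply, Matrix.vecHead, Matrix.vecTail, Function.comp, cv_0, cv7_1, cv7_2, cv7_3, cv7_4, cv7_5, cv7_6, cv6_1, cv6_2,
    cv6_3, cv6_4, cv6_5, cv5_1, cv5_2, cv5_3, cv5_4, cv4_1, cv4_2, cv4_3, cv3_1,
    cv3_2, cv2_1]

lemma minor_135 (b c : ℝ) : minorDet (Mof b c) {1,3,5} Finset.univ = 0 := by
  rw [minorDet_univ3 _ _ ![1,3,5] (by decide) (by decide) (by decide), Matrix.det_fin_three]
  simp [Mof_apply, Matrix.vecHead, Matrix.vecTail, Function.comp, cv_0, cv7_1, cv7_2, cv7_3, cv7_4, cv7_5, cv7_6, cv6_1, cv6_2,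
    cv6_3, cv6_4, cv6_5, cv5_1, cv5_2, cv5_3, cv5_4, cv4_1, cv4_2, cv4_3, cv3_1,
    cv3_2, cv2_1]

lemma minor_245 (b c : ℝ) : minorDet (Mof b c) {2,4,5} Finset.univ = 0 := by
  rw [minorDet_univ3 _ _ ![2,4,5] (by decide) (by decide) (by decide), Matrix.det_fin_three]
  simp [Mof_apply, Matrix.vecHead, Matrix.vecTail, Function.comp, cv_0, cv7_1, cv7_2, cv7_3, cv7_4, cv7_5, cv7_6, cv6_1, cv6_2,
    cv6_3, cv6_4, cv6_5, cv5_1, cv5_2, cv5_3, cv5_4, cv4_1, cv4_2, cv4_3, cv3_1,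
    cv3_2, cv2_1]

lemma minor_236 (b c : ℝ) : minorDet (Mof b c) {2,3,6} Finset.univ = 0 := by
  rw [minorDet_univ3 _ _ ![2,3,6] (by decide) (by decide) (by decide), Matrix.det_fin_three]
  simp [Mof_apply, Matrix.vecHead, Matrix.vecTail, Function.comp, cv_0, cv7_1, cv7_2, cv7_3, cv7_4, cv7_5, cv7_6, cv6_1, cv6_2,
    cv6_3, cv6_4, cv6_5, cv5_1, cv5_2, cv5_3, cv5_4, cv4_1, cv4_2, cv4_3, cv3_1,
    cv3_2, cv2_1]

/-- A = {x² = x³ = 0, y² = B²(x¹), y³ = B³(x¹)} is associative iff B², B³ are constant. -/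
theorem associative_iff_constant (B2 B3 : ℝ → ℝ)
    (hB2 : ContDiff ℝ (⊤ : ℕ∞) B2) (hB3 : ContDiff ℝ (⊤ : ℕ∞) B3) :
    (∀ p : Fin 3 → ℝ,
        pullback (fun p => ![p 0, 0, 0, p 1, p 2, B2 (p 0), B3 (p 0)]) stdOmega p =
          volCoeff (fun p => ![p 0, 0, 0, p 1, p 2, B2 (p 0), B3 (p 0)]) p •
            dxm Finset.univ) ↔
      ((∀ s t : ℝ, B2 s = B2 t) ∧ (∀ s t : ℝ, B3 s = B3 t)) := by
  set φ : (Fin 3 → ℝ) → (Fin 7 → ℝ) :=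
    fun p => ![p 0, 0, 0, p 1, p 2, B2 (p 0), B3 (p 0)] with hφdef
  have hdB2 : Differentiable ℝ B2 := hB2.differentiable (by simp)
  have hdB3 : Differentiable ℝ B3 := hB3.differentiable (by simp)
  -- the jacobian is the explicit matrix `Mof`
  have hjac : ∀ p : Fin 3 → ℝ,
      jacobian φ p = Mof (deriv B2 (p 0)) (deriv B3 (p 0)) := by
    intro p
    set b := deriv B2 (p 0) with hb
    set c := deriv B3 (p 0) with hc
    set D : Fin 7 → ((Fin 3 → ℝ) →L[ℝ] ℝ) :=
      ![ContinuousLinearMap.proj 0, 0, 0, ContinuousLinearMap.proj 1,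
        ContinuousLinearMap.proj 2, b • ContinuousLinearMap.proj 0,
        c • ContinuousLinearMap.proj 0] with hD
    have hder : HasFDerivAt φ (ContinuousLinearMap.pi D) p := by
      apply hasFDerivAt_pi''
      intro i
      rw [ContinuousLinearMap.proj_pi]
      fin_cases i
      · exact (ContinuousLinearMap.proj 0 : (Fin 3 → ℝ) →L[ℝ] ℝ).hasFDerivAt
      · exact hasFDerivAt_const _ _
      · exact hasFDerivAt_const _ _
      · exact (ContinuousLinearMap.proj 1 : (Fin 3 → ℝ) →L[ℝ] ℝ).hasFDerivAt
      · exact (ContinuousLinearMap.proj 2 : (Fin 3 → ℝ) →L[ℝ] ℝ).hasFDerivAt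
      · exact ((hdB2 (p 0)).hasDerivAt).comp_hasFDerivAt p
          (ContinuousLinearMap.proj 0 : (Fin 3 → ℝ) →L[ℝ] ℝ).hasFDerivAt
      · exact ((hdB3 (p 0)).hasDerivAt).comp_hasFDerivAt p
          (ContinuousLinearMap.proj 0 : (Fin 3 → ℝ) →L[ℝ] ℝ).hasFDerivAt
    funext i j
    rw [jacobian, hder.fderiv, ContinuousLinearMap.pi_apply, Mof_apply]
    fin_cases i <;> fin_cases j <;>
      first
        | rfl
        | exact mul_one b
        | exact mul_zero b
        | exact mul_one c
        | exact mul_zero c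
        | simp [D, Pi.single_apply]
  -- the pullback expands into seven minors
  have hpull : ∀ (p : Fin 3 → ℝ) (S : Finset (Fin 3)),
      pullback φ stdOmega p S =
        minorDet (jacobian φ p) {0,1,2} S - minorDet (jacobian φ p) {0,5,6} S
          + minorDet (jacobian φ p) {0,3,4} S + minorDet (jacobian φ p) {1,4,6} S
          + minorDet (jacobian φ p) {1,3,5} S - minorDet (jacobian φ p) {2,4,5} S
          + minorDet (jacobian φ p) {2,3,6} S := by
    intro p S
    show (∑ T : Finset (Fin 7), stdOmega T * minorDet (jacobian φ p) T S) = _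
    rw [stdOmega_eq]
    simp only [sub_mul, add_mul, Finset.sum_sub_distrib, Finset.sum_add_distrib,
      sum_dxm_mul]
  constructor
  · intro H
    have hzero : ∀ t : ℝ, deriv B2 t = 0 ∧ deriv B3 t = 0 := by
      intro t
      have h1 := congrFun (H (fun _ => t)) Finset.univ
      rw [hpull, hjac] at h1
      rw [minor_012, minor_056, minor_034, minor_146, minor_135, minor_245,
        minor_236] at h1
      have h2 : (1 : ℝ) = volCoeff φ (fun _ => t) := by
        simpa [dxm] using h1
      rw [volCoeff, hjac, Mof_det] at h2
      have h3 : (1 : ℝ) + deriv B2 t ^ 2 + deriv B3 t ^ 2 = 1 :=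
        Real.sqrt_eq_one.mp h2.symm
      constructor <;> nlinarith [sq_nonneg (deriv B2 t), sq_nonneg (deriv B3 t)]
    exact ⟨is_const_of_deriv_eq_zero hdB2 (fun t => (hzero t).1),
      is_const_of_deriv_eq_zero hdB3 (fun t => (hzero t).2)⟩
  · rintro ⟨h2, h3⟩
    have d2 : ∀ t : ℝ, deriv B2 t = 0 := by
      intro t
      rw [show B2 = fun _ => B2 0 from funext fun s => h2 s 0]
      simp
    have d3 : ∀ t : ℝ, deriv B3 t = 0 := by
      intro t
      rw [show B3 = fun _ => B3 0 from funext fun s => h3 s 0]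
      simp
    intro p
    funext S
    by_cases hS : S = Finset.univ
    · subst hS
      rw [hpull, hjac]
      rw [minor_012, minor_056, minor_034, minor_146, minor_135, minor_245, minor_236]
      rw [volCoeff, hjac, Mof_det, d2, d3]
      norm_num [dxm]
    · have hc3 : S.card ≠ 3 := by
        intro h
        exact hS ((Finset.card_eq_iff_eq_univ S).mp (by simpa using h))
      rw [hpull]
      rw [minorDet_ne _ _ _ (by simpa using hc3), minorDet_ne _ _ _ (by simpa using hc3),
        minorDet_ne _ _ _ (by simpa using hc3), minorDet_ne _ _ _ (by simpa using hc3),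
        minorDet_ne _ _ _ (by simpa using hc3), minorDet_ne _ _ _ (by simpa using hc3),
        minorDet_ne _ _ _ (by simpa using hc3)]
      simp [dxm, hS]
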